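/- arXiv:1904.03214 — 3 statements merged into one kernel-verified Lean document; each statement's English description precedes it below -/
import Mathlib

section
/- Let m, l ≥ 3 with l odd, and let f: C_m → C_l be a graph homomorphism with degree deg f (the integer such that f_E(O_m) = deg f · O_l). Then |deg f| ≤ m/l. -/
/-- The oriented edge `[u,v]` as an edge chain: the antisymmetrized generator. -/
noncomputable def oe {V : Type*} [DecidableEq V] (u v : V) : V × V →₀ ℤ :=
  Finsupp.single (u, v) 1 - Finsupp.single (v, u) 1

/-- The map on edge chains induced by a map on vertices. -/
noncomputable def fE {V W : Type*} [DecidableEq V] [DecidableEq W] (f : V → W) :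
    (V × V →₀ ℤ) →+ (W × W →₀ ℤ) :=
  Finsupp.mapDomain.addMonoidHom (Prod.map f f)

/-- Adjacency in the `m`-cycle on vertex set `ZMod m`. -/
def CycAdj (m : ℕ) (u v : ZMod m) : Prop := v = u + 1 ∨ v = u - 1

/-- The oriented cycle `O_m = [0,1] + [1,2] + ⋯ + [m-1,0]` as an edge chain. -/
noncomputable def cycO (m : ℕ) : ZMod m × ZMod m →₀ ℤ :=
  ∑ i ∈ Finset.range m, oe (i : ZMod m) ((i : ZMod m) + 1)

/-!
Weight each oriented edge `[u, u ± 1]` of `C_l` by `±1`. The resulting linear functional on edge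
chains takes the value `2l` on `O_l` (each edge of `O_l` is counted once as `[i, i+1]` and once,
negatively, as `[i+1, i]`), while on the image of any chain of `m` oriented edges it is at most
`2m` in absolute value. Evaluating it on `f_E(O_m) = d • O_l` gives `|d| · 2l ≤ 2m`.
-/

open Finsupp

lemma fE_oe {V W : Type*} [DecidableEq V] [DecidableEq W] (f : V → W) (u v : V) :
    fE f (oe u v) = oe (f u) (f v) := by
  simp [fE, oe, mapDomain_sub]

lemma ZMod.two_ne_zero_of_three_le {l : ℕ} (hl : 3 ≤ l) : (2 : ZMod l) ≠ 0 := by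
  have : ((2 : ℕ) : ZMod l) ≠ 0 := by
    rw [Ne, ZMod.natCast_eq_zero_iff]
    exact fun h => absurd (Nat.le_of_dvd two_pos h) (by omega)
  exact_mod_cast this

section StepSign

variable {R : Type*} [CommRing R] [DecidableEq R]

def stepSign (e : R × R) : ℤ :=
  (if e.2 = e.1 + 1 then 1 else 0) - (if e.2 = e.1 - 1 then 1 else 0)

lemma stepSign_swap (u v : R) : stepSign (v, u) = -stepSign (u, v) := by
  have h₁ : u = v + 1 ↔ v = u - 1 := by rw [eq_sub_iff_add_eq, eq_comm]
  have h₂ : u = v - 1 ↔ v = u + 1 := by rw [eq_sub_iff_add_eq, eq_comm]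
  simp only [stepSign, h₁, h₂]
  ring

lemma abs_stepSign_le_one (e : R × R) : |stepSign e| ≤ 1 := by
  unfold stepSign
  split_ifs <;> norm_num

lemma stepSign_add_one (h2 : (2 : R) ≠ 0) (u : R) : stepSign (u, u + 1) = 1 := by
  have hne : u + 1 ≠ u - 1 := fun h => h2 (by linear_combination h)
  simp [stepSign, hne]

noncomputable def winding : (R × R →₀ ℤ) →ₗ[ℤ] ℤ :=
  linearCombination ℤ stepSign

lemma winding_oe (u v : R) : winding (oe u v) = 2 * stepSign (u, v) := by
  simp only [winding, oe, map_sub, linearCombination_single, stepSign_swap u v]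
  ring

lemma abs_winding_fE_cycO_le {m : ℕ} (f : ZMod m → R) :
    |winding (fE f (cycO m))| ≤ 2 * m := by
  rw [cycO, map_sum, map_sum]
  calc |∑ i ∈ Finset.range m, winding (fE f (oe (i : ZMod m) (i + 1)))|
      ≤ ∑ i ∈ Finset.range m, |winding (fE f (oe (i : ZMod m) (i + 1)))| :=
        Finset.abs_sum_le_sum_abs _ _
    _ ≤ ∑ _i ∈ Finset.range m, 2 := by
        refine Finset.sum_le_sum fun i _ => ?_
        rw [fE_oe, winding_oe, abs_mul, abs_two]
        linarith [abs_stepSign_le_one (f i, f (i + 1))]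
    _ = 2 * m := by simp [mul_comm]

end StepSign

lemma winding_cycO {l : ℕ} (hl : 3 ≤ l) : winding (cycO l) = 2 * l := by
  simp [cycO, winding_oe, stepSign_add_one (ZMod.two_ne_zero_of_three_le hl), mul_comm]

theorem degree_le_general (m l : ℕ) (hl : 3 ≤ l)
    (f : ZMod m → ZMod l)
    (d : ℤ) (hd : fE f (cycO m) = d • cycO l) :
    d.natAbs * l ≤ m := by
  have hbound := abs_winding_fE_cycO_le f
  rw [hd, map_zsmul, winding_cycO hl, smul_eq_mul, abs_mul, Int.abs_eq_natAbs] at hbound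
  have : (d.natAbs : ℤ) * l ≤ m := by
    rw [abs_of_nonneg (by positivity)] at hbound
    linarith
  exact_mod_cast this

/-- If `f : C_m → C_l` is a graph homomorphism (`m, l ≥ 3`, `l` odd) with degree `d`
(i.e. `f_E(O_m) = d • O_l`), then `|d| ≤ m / l`, i.e. `|d| * l ≤ m`. -/
theorem degree_le (m l : ℕ) (hm : 3 ≤ m) (hl : 3 ≤ l) (hlodd : Odd l)
    (f : ZMod m → ZMod l) (hf : ∀ u v, CycAdj m u v → CycAdj l (f u) (f v))
    (d : ℤ) (hd : fE f (cycO m) = d • cycO l) :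
    d.natAbs * l ≤ m :=
  degree_le_general m l hl f d hd
end

section
/- Let n ≥ 2, k ≥ 3 odd, and f: C_k^n → C_3 a polymorphism with degrees deg_i f at each coordinate. Define the joint degree deg_{1,2} f by f_E(O_{k,{1,2}}^n) = 2^{n-2} k^{n-1} deg_{1,2} f · O_3, where O_{k,{1,2}}^n = O_{k,1}^n ∩ O_{k,2}^n. Then deg_{1,2} f = deg_1 f + deg_2 f. -/
/-- Adjacency in the direct power `C_kⁿ`: coordinatewise adjacency in `C_k`. -/
def PowAdj (k n : ℕ) (x y : Fin n → ZMod k) : Prop := ∀ i, CycAdj k (x i) (y i)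

open Classical in
/-- The edge chain `O_{k,i}ⁿ` of all oriented edges of `C_kⁿ` whose `i`-th coordinate is
oriented according to `O_k`. -/
noncomputable def Okin (k n : ℕ) [NeZero k] (i : Fin n) :
    ((Fin n → ZMod k) × (Fin n → ZMod k)) →₀ ℤ :=
  ∑ p ∈ Finset.univ.filter
      (fun p : (Fin n → ZMod k) × (Fin n → ZMod k) =>
        PowAdj k n p.1 p.2 ∧ p.2 i = p.1 i + 1),
    oe p.1 p.2

open Classical in
/-- The edge chain `O_{k,{1,2}}ⁿ` of all oriented edges of `C_kⁿ` whose first two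
coordinates are both oriented according to `O_k`. -/
noncomputable def Okin2 (k n : ℕ) [NeZero k] (i₁ i₂ : Fin n) :
    ((Fin n → ZMod k) × (Fin n → ZMod k)) →₀ ℤ :=
  ∑ p ∈ Finset.univ.filter
      (fun p : (Fin n → ZMod k) × (Fin n → ZMod k) =>
        PowAdj k n p.1 p.2 ∧ p.2 i₁ = p.1 i₁ + 1 ∧ p.2 i₂ = p.1 i₂ + 1),
    oe p.1 p.2

/-! Since `k ≠ 2`, every edge of `C_kⁿ` follows `O_k` in a given coordinate in exactly one of its
two orientations. Hence an edge following `O_k` in the first coordinate but not the second is the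
reverse of one following it in the second but not the first, and these cancel in
`O_{k,1}ⁿ + O_{k,2}ⁿ`, leaving `2 O_{k,{1,2}}ⁿ`. Applying `f_E` and comparing the coefficients of
`O_3 ≠ 0` gives `2 · 2^{n-2} k^{n-1} deg_{1,2} f = (2k)^{n-1} (deg_1 f + deg_2 f)`. -/

section EdgeChains

variable {V : Type*} [DecidableEq V]

lemma oe_swap (u v : V) : oe v u = -oe u v := by
  simp [oe]

variable [Fintype V]

lemma sum_oe_filter_swap (R : V × V → Prop) [DecidablePred R] :
    ∑ p ∈ Finset.univ.filter (fun p : V × V => R p.swap), oe p.1 p.2 =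
      -∑ p ∈ Finset.univ.filter R, oe p.1 p.2 := by
  rw [← Finset.sum_neg_distrib]
  exact Finset.sum_nbij' Prod.swap Prod.swap (by simp) (by simp) (by simp) (by simp)
    (fun p _ => oe_swap p.2 p.1)

lemma two_smul_sum_oe_filter_and (E P Q : V × V → Prop)
    [DecidablePred E] [DecidablePred P] [DecidablePred Q]
    (hE : ∀ p, E p → E p.swap) (hP : ∀ p, E p → (P p.swap ↔ ¬P p))
    (hQ : ∀ p, E p → (Q p.swap ↔ ¬Q p)) :
    (2 : ℤ) • ∑ p ∈ Finset.univ.filter (fun p => E p ∧ P p ∧ Q p), oe p.1 p.2 =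
      ∑ p ∈ Finset.univ.filter (fun p => E p ∧ P p), oe p.1 p.2 +
        ∑ p ∈ Finset.univ.filter (fun p => E p ∧ Q p), oe p.1 p.2 := by
  have splitP : ∑ p ∈ Finset.univ.filter (fun p => E p ∧ P p), oe p.1 p.2 =
      ∑ p ∈ Finset.univ.filter (fun p => E p ∧ P p ∧ Q p), oe p.1 p.2 +
        ∑ p ∈ Finset.univ.filter (fun p => E p ∧ P p ∧ ¬Q p), oe p.1 p.2 := by
    rw [← Finset.sum_filter_add_sum_filter_not _ Q]
    simp only [Finset.filter_filter, and_assoc]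
  have splitQ : ∑ p ∈ Finset.univ.filter (fun p => E p ∧ Q p), oe p.1 p.2 =
      ∑ p ∈ Finset.univ.filter (fun p => E p ∧ P p ∧ Q p), oe p.1 p.2 +
        ∑ p ∈ Finset.univ.filter (fun p => E p ∧ ¬P p ∧ Q p), oe p.1 p.2 := by
    rw [← Finset.sum_filter_add_sum_filter_not _ P]
    simp only [Finset.filter_filter, and_assoc, and_comm (a := Q _)]
  have hcancel : ∑ p ∈ Finset.univ.filter (fun p => E p ∧ ¬P p ∧ Q p), oe p.1 p.2 =
      -∑ p ∈ Finset.univ.filter (fun p => E p ∧ P p ∧ ¬Q p), oe p.1 p.2 := by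
    rw [← sum_oe_filter_swap]
    congr! 2 with p
    constructor
    · rintro ⟨hp, hPp, hQp⟩
      exact ⟨hE p hp, (hP p hp).mpr hPp, fun h => (hQ p hp).mp h hQp⟩
    · rintro ⟨hp, hPp, hQp⟩
      have hp' : E p := hE _ hp
      exact ⟨hp', fun h => (hP p hp').mp hPp h, not_not.mp (mt (hQ p hp').mpr hQp)⟩
  rw [two_smul, splitP, splitQ, hcancel]
  abel

end EdgeChains

lemma CycAdj.symm {m : ℕ} {u v : ZMod m} (h : CycAdj m u v) : CycAdj m v u := by
  rcases h with rfl | rfl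
  · exact Or.inr (add_sub_cancel_right u 1).symm
  · exact Or.inl (sub_add_cancel u 1).symm

lemma PowAdj.symm {k n : ℕ} {x y : Fin n → ZMod k} (h : PowAdj k n x y) : PowAdj k n y x :=
  fun i => (h i).symm

lemma CycAdj.add_one_iff_not {m : ℕ} (h2 : (2 : ZMod m) ≠ 0) {u v : ZMod m}
    (h : CycAdj m u v) : u = v + 1 ↔ ¬v = u + 1 := by
  constructor
  · rintro rfl hv
    exact h2 (by linear_combination -hv)
  · intro hv
    rcases h with h | rfl
    · exact absurd h hv
    · ring

lemma two_ne_zero_of_three_le {k : ℕ} (hk : 3 ≤ k) : (2 : ZMod k) ≠ 0 := by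
  have h := (ZMod.natCast_eq_zero_iff 2 k).not.mpr (fun hdvd => by
    have := Nat.le_of_dvd two_pos hdvd; omega)
  exact_mod_cast h

open Classical in
lemma two_smul_Okin2 {k n : ℕ} [NeZero k] (h2 : (2 : ZMod k) ≠ 0) (i₁ i₂ : Fin n) :
    (2 : ℤ) • Okin2 k n i₁ i₂ = Okin k n i₁ + Okin k n i₂ :=
  two_smul_sum_oe_filter_and (fun p => PowAdj k n p.1 p.2)
    (fun p => p.2 i₁ = p.1 i₁ + 1) (fun p => p.2 i₂ = p.1 i₂ + 1)
    (fun _ hp => hp.symm)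
    (fun _ hp => (hp i₁).add_one_iff_not h2) (fun _ hp => (hp i₂).add_one_iff_not h2)

lemma cycO_three_ne_zero : cycO 3 ≠ 0 := by
  intro h
  have h01 := congrArg (· ((0 : ZMod 3), (1 : ZMod 3))) h
  simp [cycO, Finset.sum_range_succ, oe, Finsupp.single_apply] at h01
  exact absurd h01 (by decide)

/-- For a polymorphism `f : C_kⁿ → C_3` (`n ≥ 2`, `k ≥ 3` odd), the joint degree at the
first two coordinates, defined by `f_E(O_{k,{1,2}}ⁿ) = 2^{n-2} k^{n-1} deg_{1,2} f • O_3`,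
equals the sum of the degrees at the first two coordinates. -/
theorem joint_degree_eq_sum (k n : ℕ) [NeZero k] (hk : 3 ≤ k)
    (hn : 2 ≤ n) (f : (Fin n → ZMod k) → ZMod 3)
    (d₁ d₂ d₁₂ : ℤ)
    (hd₁ : fE f (Okin k n ⟨0, by omega⟩) = ((2 * (k : ℤ)) ^ (n - 1) * d₁) • cycO 3)
    (hd₂ : fE f (Okin k n ⟨1, by omega⟩) = ((2 * (k : ℤ)) ^ (n - 1) * d₂) • cycO 3)
    (hd₁₂ : fE f (Okin2 k n ⟨0, by omega⟩ ⟨1, by omega⟩) =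
      ((2 : ℤ) ^ (n - 2) * (k : ℤ) ^ (n - 1) * d₁₂) • cycO 3) :
    d₁₂ = d₁ + d₂ := by
  have h := congrArg (fE f)
    (two_smul_Okin2 (two_ne_zero_of_three_le hk) ⟨0, by omega⟩ ⟨1, by omega⟩)
  rw [map_zsmul, map_add, hd₁₂, hd₁, hd₂, smul_smul, ← add_smul] at h
  have hcoef := smul_left_injective ℤ cycO_three_ne_zero h
  obtain ⟨m, rfl⟩ : ∃ m, n = m + 2 := ⟨n - 2, by omega⟩
  have hk0 : (2 * (k : ℤ)) ^ (m + 1) ≠ 0 := pow_ne_zero _ (by positivity)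
  refine mul_left_cancel₀ hk0 ?_
  simp only [Nat.add_sub_cancel, show m + 2 - 1 = m + 1 by omega] at hcoef
  linear_combination hcoef
end

section
/- Let k ≥ 9 be odd. Then Pol(C_k, C_3) contains an Olšák function, i.e., a 6-ary polymorphism o: C_k^6 → C_3 satisfying o(x,x,y,y,y,x) = o(x,y,x,y,x,y) = o(y,x,x,x,y,y) for all vertices x, y of C_k. Concretely, one may take o(x_1,...,x_6) = h_k((x_1 + x_2 + x_3) mod k) where h_k is a suitable 3-colouring of the auxiliary graph D_k with N = 3. -/
/-! The map `(x₁, …, x₆) ↦ x₁ + x₂ + x₃` satisfies the three Olšák identities trivially, and it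
sends adjacent tuples of `C_k⁶` to vertices of `ℤ/k` differing by `±1` or `±3`. So it suffices to
properly 3-colour the graph `D_k` on `ℤ/k` joining vertices at distance `1` or `3`; for odd `k ≥ 9`
an alternating `0, 1` colouring of `0, …, k - 6`, patched by `2, 1, 2, 0, 2` on the last five
vertices, does this. -/

def DAdj (m : ℕ) (a b : ZMod m) : Prop := b = a + 1 ∨ b = a + 3 ∨ a = b + 1 ∨ a = b + 3

theorem dAdj_add_add_of_cycAdj {m : ℕ} {u₀ u₁ u₂ v₀ v₁ v₂ : ZMod m} (h₀ : CycAdj m u₀ v₀)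
    (h₁ : CycAdj m u₁ v₁) (h₂ : CycAdj m u₂ v₂) : DAdj m (u₀ + u₁ + u₂) (v₀ + v₁ + v₂) := by
  unfold DAdj
  rcases h₀ with rfl | rfl <;> rcases h₁ with rfl | rfl <;> rcases h₂ with rfl | rfl <;>
    first
    | (left; ring1)
    | (right; left; ring1)
    | (right; right; left; ring1)
    | (right; right; right; ring1)

/-- Since `k` is odd, plain alternation clashes across the wrap-around `k - 1 → 0`; the last five
representatives are recoloured to repair it. -/
def dColour (k n : ℕ) : ZMod 3 :=
  if n = k - 5 then 2 else if n = k - 4 then 1 else if n = k - 3 then 2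
  else if n = k - 2 then 0 else if n = k - 1 then 2 else if n % 2 = 0 then 0 else 1

-- `hm` and `hmk` say `m = (n + d) mod k`, in a form `omega` can use.
theorem dColour_ne_of_step {k n m d : ℕ} (hk : 9 ≤ k) (hodd : k % 2 = 1) (hn : n < k)
    (hd : d = 1 ∨ d = 3) (hm : m = n + d ∨ m + k = n + d) (hmk : m < k) :
    dColour k n ≠ dColour k m := by
  unfold dColour
  split_ifs <;> first | decide | omega

theorem dColour_val_ne_val_add {k : ℕ} [NeZero k] (hk : 9 ≤ k) (hodd : Odd k) (a : ZMod k)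
    {d : ℕ} (hd : d = 1 ∨ d = 3) : dColour k a.val ≠ dColour k (a + d).val := by
  have hdk : d < k := by omega
  have hval : (a + d).val = (a.val + d) % k := by
    rw [ZMod.val_add, ZMod.val_natCast, Nat.mod_eq_of_lt hdk]
  have hwrap : (a.val + d) % k = a.val + d ∨ (a.val + d) % k + k = a.val + d := by
    by_cases h : a.val + d < k
    · exact .inl (Nat.mod_eq_of_lt h)
    · rw [Nat.mod_eq_sub_mod (not_lt.1 h), Nat.mod_eq_of_lt (by have := a.val_lt; omega)]
      omega
  rw [hval]
  exact dColour_ne_of_step hk (Nat.odd_iff.1 hodd) a.val_lt hd hwrap (Nat.mod_lt _ (by omega))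

theorem dColour_ne_of_dAdj {k : ℕ} [NeZero k] (hk : 9 ≤ k) (hodd : Odd k) {a b : ZMod k}
    (h : DAdj k a b) : dColour k a.val ≠ dColour k b.val := by
  have step1 (c : ZMod k) := dColour_val_ne_val_add hk hodd c (d := 1) (.inl rfl)
  have step3 (c : ZMod k) := dColour_val_ne_val_add hk hodd c (d := 3) (.inr rfl)
  push_cast at step1 step3
  rcases h with rfl | rfl | rfl | rfl
  · exact step1 a
  · exact step3 a
  · exact (step1 b).symm
  · exact (step3 b).symm

/-- For odd `k ≥ 9`, `Pol(C_k, C_3)` contains an Olšák function: a 6-ary polymorphism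
`o : C_k⁶ → C_3` (where `C_3` is the triangle on `ZMod 3`, adjacency being inequality)
satisfying `o(x,x,y,y,y,x) = o(x,y,x,y,x,y) = o(y,x,x,x,y,y)` for all vertices `x, y`. -/
theorem olsak_exists (k : ℕ) (hk : 9 ≤ k) (hkodd : Odd k) :
    ∃ o : (Fin 6 → ZMod k) → ZMod 3,
      (∀ x y : Fin 6 → ZMod k, (∀ i, CycAdj k (x i) (y i)) → o x ≠ o y) ∧
      ∀ x y : ZMod k,
        o ![x, x, y, y, y, x] = o ![x, y, x, y, x, y] ∧
        o ![x, y, x, y, x, y] = o ![y, x, x, x, y, y] := by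
  have : NeZero k := ⟨by omega⟩
  refine ⟨fun v => dColour k (v 0 + v 1 + v 2).val, fun x y hxy => ?_, fun x y => ?_⟩
  · exact dColour_ne_of_dAdj hk hkodd (dAdj_add_add_of_cycAdj (hxy 0) (hxy 1) (hxy 2))
  · constructor
    · show dColour k (x + x + y).val = dColour k (x + y + x).val
      rw [add_right_comm]
    · show dColour k (x + y + x).val = dColour k (y + x + x).val
      rw [add_comm x y]
end
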